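/- (Abstract transference decomposition.) For every d ≥ 1, every T > 1, every η ∈ (0,1) and every function C : ℕ → (0,∞) there exists ε > 0 such that the following holds for every N ≥ 1. Let ν_I : (ZMod N)^I → ℝ for I ⊊ {1,…,d} be nonnegative weights, let ν_{[d]} : (ZMod N)^d → ℝ be nonnegative, and let Ω ⊆ (ZMod N)^d have face structure. Assume: (i) |Dg(x)| ≤ T for every g ∈ S_T and every x ∈ Ω; (ii) for every m ≥ 0 and all g_1,…,g_m ∈ S_T, |⟨∏_{j=1}^m Dg_j, f⟩_ν| ≤ C(m) whenever ‖f‖_{□,ν} ≤ 1; (iii) ⟨f, Df⟩_ν > 0 for every nonzero f ∈ F_T; (iv) ‖ν_{[d]} − 1‖_{□,ν} ≤ ε, ⟨ν_{[d]}, 1⟩_ν ≤ 1 + ε and ⟨1, 1⟩_ν ≤ 1 + ε. Then for every f : (ZMod N)^d → ℝ with 0 ≤ f ≤ ν_{[d]} pointwise there exist functions g, h : (ZMod N)^d → ℝ such that f(x) = g(x) + h(x) for all x ∈ Ω, 0 ≤ g(x) ≤ 2 for all x ∈ Ω, and ‖h·1_Ω‖_{□,ν} ≤ η. -/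

import Mathlib

/-!
Write `G(u) = ‖u‖_{□,ν}^{2^d}` and minimise `G` over the compact convex box of functions `u`
vanishing off `Ω` with `f - 2 ≤ u ≤ f` on `Ω`; then `h = u` and `g = f - u`. Because the cube is
symmetric under `ω ↦ ω + σ`, every slot of the Gowers inner product contributes the same
derivative, so the first variation of `G` at `u` towards `v` is `2^d ⟨v - u, Du⟩_ν`. Minimality
gives `G(u) = ⟨u, Du⟩_ν ≤ ⟨v, Du⟩_ν` for every `v` in the box, and the choice
`v = f - 2·1_{Du > 0}` on `Ω` bounds this by `⟨(ν_{[d]} - 1) max(Du, 0), 1⟩_ν`; here the face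
structure is used through `Du = 0` off `Ω`. Replacing `max(·, 0)` by a Weierstrass polynomial on
`[-T, T]`, condition (ii) controls each monomial `⟨(Du)^k, ν_{[d]} - 1⟩_ν` by `C(k) ε`, and the
mass bounds in (iv) absorb the approximation error, giving `G(u) ≤ η^{2^d}`.

That `G ≥ 0`, needed to take `2^d`-th roots, is Cauchy–Schwarz in one coordinate: resampling the
`i`-th coordinates of `x` and `y` factors the integrand of `G` as `C · H(s) · H(t)` with `C ≥ 0`.
-/

noncomputable section
open Finset

/-- `P_ω(x,y)`: the point whose `i`-th coordinate is `x i` if `ω i = false` and `y i` otherwise. -/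
def proj {ι : Type*} {N : ℕ} (ω : ι → Bool) (x y : ι → ZMod N) : ι → ZMod N :=
  fun i => if ω i then y i else x i

/-- `P_{ω_I}(x_I, y_I)` as a function on the subtype `↥I`. -/
def projI {ι : Type*} {N : ℕ} {I : Finset ι} (ω : I → Bool) (x y : ι → ZMod N) :
    I → ZMod N :=
  fun i => if ω i then y i.1 else x i.1

/-- The product of the weights `ν_I(P_{ω_I}(x_I,y_I))` over proper subsets `I ⊊ ι`
and all `ω_I ∈ {0,1}^I`. -/
def weightProd {ι : Type*} [Fintype ι] [DecidableEq ι] {N : ℕ}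
    (ν : (I : Finset ι) → (I → ZMod N) → ℝ) (x y : ι → ZMod N) : ℝ :=
  ∏ I ∈ univ.filter (fun I : Finset ι => I ≠ univ), ∏ ω : I → Bool, ν I (projI ω x y)

/-- The weighted Gowers inner product `⟨(f_ω)⟩_{□,ν}`. -/
def gowersInner {ι : Type*} [Fintype ι] [DecidableEq ι] {N : ℕ} [NeZero N]
    (ν : (I : Finset ι) → (I → ZMod N) → ℝ)
    (f : (ι → Bool) → (ι → ZMod N) → ℝ) : ℝ :=
  Finset.expect Finset.univ fun x : ι → ZMod N =>
    Finset.expect Finset.univ fun y : ι → ZMod N =>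
      (∏ ω : ι → Bool, f ω (proj ω x y)) * weightProd ν x y

/-- The weighted box norm `‖f‖_{□,ν}`. -/
def boxNorm {ι : Type*} [Fintype ι] [DecidableEq ι] {N : ℕ} [NeZero N]
    (ν : (I : Finset ι) → (I → ZMod N) → ℝ) (f : (ι → ZMod N) → ℝ) : ℝ :=
  gowersInner ν (fun _ => f) ^ (((2 : ℝ) ^ (Fintype.card ι))⁻¹)


/-- The weighted inner product `⟨f,g⟩_ν`. -/
def wInner {ι : Type*} [Fintype ι] [DecidableEq ι] {N : ℕ} [NeZero N]
    (ν : (I : Finset ι) → (I → ZMod N) → ℝ) (f g : (ι → ZMod N) → ℝ) : ℝ :=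
  Finset.expect Finset.univ fun x : ι → ZMod N =>
    f x * g x * ∏ I ∈ univ.filter (fun I : Finset ι => I ≠ univ), ν I (fun i => x i.1)

/-- The dual function `Df`. -/
def dualFn {ι : Type*} [Fintype ι] [DecidableEq ι] {N : ℕ} [NeZero N]
    (ν : (I : Finset ι) → (I → ZMod N) → ℝ) (f : (ι → ZMod N) → ℝ)
    (x : ι → ZMod N) : ℝ :=
  Finset.expect Finset.univ fun y : ι → ZMod N =>
    (∏ ω ∈ univ.filter (fun ω : ι → Bool => ω ≠ fun _ => false), f (proj ω x y)) *
      ∏ I ∈ univ.filter (fun I : Finset ι => I ≠ univ),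
        ∏ ω ∈ univ.filter (fun ω : I → Bool => ω ≠ fun _ => false), ν I (projI ω x y)

/-- A set `Ω` has face structure if it is the intersection of sets `Ω_J` over `∅ ≠ J ⊊ ι`,
where membership in `Ω_J` depends only on the coordinates outside of `J`. -/
def HasFaceStructure {ι : Type*} [Fintype ι] [DecidableEq ι] {N : ℕ}
    (Ω : Set (ι → ZMod N)) : Prop :=
  ∃ ΩJ : Finset ι → Set (ι → ZMod N),
    (∀ J : Finset ι, J ≠ ∅ → J ≠ univ →
      ∀ x y : ι → ZMod N, (∀ i, i ∉ J → x i = y i) → (x ∈ ΩJ J → y ∈ ΩJ J)) ∧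
    Ω = ⋂ J ∈ {J : Finset ι | J ≠ ∅ ∧ J ≠ univ}, ΩJ J

/-- `F_T`: functions supported on `Ω`. -/
def FT {ι : Type*} {N : ℕ} (Ω : Set (ι → ZMod N)) : Set ((ι → ZMod N) → ℝ) :=
  {f | ∀ x, x ∉ Ω → f x = 0}

/-- `S_T`: functions supported on `Ω` and dominated by `ν_{[d]} + 2`. -/
def STset {ι : Type*} {N : ℕ} (Ω : Set (ι → ZMod N)) (νd : (ι → ZMod N) → ℝ) :
    Set ((ι → ZMod N) → ℝ) :=
  {f | f ∈ FT Ω ∧ ∀ x, |f x| ≤ νd x + 2}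

open Function
open scoped BigOperators

lemma Finset.prod_ite_eq_mul_prod_filter_ne {β M : Type*} [Fintype β] [DecidableEq β]
    [CommMonoid M] (b : β) (f g : β → M) :
    ∏ j, (if j = b then f j else g j) = f b * ∏ j ∈ univ.filter (· ≠ b), g j := by
  rw [prod_ite, filter_eq', if_pos (mem_univ b), prod_singleton]

lemma Finset.prod_eq_mul_prod_filter_ne {β M : Type*} [Fintype β] [DecidableEq β]
    [CommMonoid M] (b : β) (f : β → M) :
    ∏ j, f j = f b * ∏ j ∈ univ.filter (· ≠ b), f j := by
  simpa using prod_ite_eq_mul_prod_filter_ne b f f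

lemma expect_expect_update {ι α : Type*} [DecidableEq ι] [Fintype ι] [Fintype α] [Nonempty α]
    (F : (ι → α) → ℝ) (i : ι) : 𝔼 x, 𝔼 s, F (update x i s) = 𝔼 x, F x := by
  let e : (ι → α) × α ≃ (ι → α) × α := Involutive.toPerm (fun p => (update p.1 i p.2, p.1 i))
    (fun p => by simp)
  calc 𝔼 x, 𝔼 s, F (update x i s) = 𝔼 p : (ι → α) × α, F (e p).1 := by
        rw [← Finset.univ_product_univ, Finset.expect_product]; rfl
    _ = 𝔼 p : (ι → α) × α, F p.1 := Fintype.expect_equiv e _ _ fun _ => rfl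
    _ = 𝔼 x, F x := by
        rw [← Finset.univ_product_univ, Finset.expect_product]
        simp

lemma HasDerivAt.fun_finsetExpect {β : Type*} {s : Finset β} {A : β → ℝ → ℝ} {A' : β → ℝ}
    {t : ℝ} (h : ∀ b ∈ s, HasDerivAt (A b) (A' b) t) :
    HasDerivAt (fun τ => 𝔼 b ∈ s, A b τ) (𝔼 b ∈ s, A' b) t := by
  simp only [Finset.expect_eq_sum_div_card]
  exact (HasDerivAt.fun_sum h).div_const _

lemma HasDerivAt.nonneg_of_isMinOn_Icc {φ : ℝ → ℝ} {φ' : ℝ} (hφ : HasDerivAt φ φ' 0)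
    (hmin : IsMinOn φ (Set.Icc 0 1) 0) : 0 ≤ φ' := by
  have hcone : (1 : ℝ) ∈ posTangentConeAt (Set.Icc 0 1) 0 :=
    mem_posTangentConeAt_of_segment_subset (by simp [segment_eq_Icc])
  simpa using hmin.localize.hasFDerivWithinAt_nonneg hφ.hasFDerivAt.hasFDerivWithinAt hcone

lemma rpow_inv_two_pow_of_nonneg {x : ℝ} (hx : 0 ≤ x) (n : ℕ) :
    (x ^ 2 ^ n) ^ ((2 : ℝ) ^ n)⁻¹ = x := by
  simpa using Real.pow_rpow_inv_natCast hx (pow_ne_zero n two_ne_zero)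

lemma exists_pos_le_one_mul_le (B : ℝ) {c : ℝ} (hc : 0 < c) :
    ∃ ε : ℝ, 0 < ε ∧ ε ≤ 1 ∧ ε * B ≤ c := by
  have hε0 : 0 < min 1 (c / (|B| + 1)) := by positivity
  refine ⟨_, hε0, min_le_left _ _, ?_⟩
  have := (le_div_iff₀ (by positivity)).mp (min_le_right 1 (c / (|B| + 1)))
  nlinarith [mul_le_mul_of_nonneg_left (le_abs_self B) hε0.le]

section Splitting

variable {ι α : Type*} [DecidableEq ι]

/-- Resampling the `i`-th coordinates of `x` and `y` as `s` and `t` exhibits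
`𝔼 x, 𝔼 y, K x y` as an average of `C x y * (𝔼 s, H x y s) ^ 2 ≥ 0`. -/
def SplitsAt (i : ι) (K : (ι → α) → (ι → α) → ℝ) : Prop :=
  ∃ (C : (ι → α) → (ι → α) → ℝ) (H : (ι → α) → (ι → α) → α → ℝ), (∀ x y, 0 ≤ C x y) ∧
    ∀ x y s t, K (update x i s) (update y i t) = C x y * (H x y s * H x y t)

namespace SplitsAt

variable {i : ι} {K L : (ι → α) → (ι → α) → ℝ}

lemma one : SplitsAt i (fun _ _ : ι → α => (1 : ℝ)) :=
  ⟨fun _ _ => 1, fun _ _ _ => 1, fun _ _ => zero_le_one, fun _ _ _ _ => by ring⟩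

lemma mul (hK : SplitsAt i K) (hL : SplitsAt i L) : SplitsAt i (fun x y => K x y * L x y) := by
  obtain ⟨C, H, hC, hKCH⟩ := hK
  obtain ⟨C', H', hC', hLCH⟩ := hL
  refine ⟨fun x y => C x y * C' x y, fun x y s => H x y s * H' x y s,
    fun x y => mul_nonneg (hC x y) (hC' x y), fun x y s t => ?_⟩
  simp only [hKCH, hLCH]
  ring

lemma finsetProd {β : Type*} {s : Finset β} {K : β → (ι → α) → (ι → α) → ℝ}
    (h : ∀ b ∈ s, SplitsAt i (K b)) : SplitsAt i (fun x y => ∏ b ∈ s, K b x y) := by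
  have := Finset.prod_induction K (SplitsAt i) (fun _ _ hK hL => hK.mul hL) one h
  simpa only [Finset.prod_fn] using this

lemma of_update_eq (hK : ∀ x y, 0 ≤ K x y)
    (hupd : ∀ x y s t, K (update x i s) (update y i t) = K x y) : SplitsAt i K :=
  ⟨K, fun _ _ _ => 1, hK, fun x y s t => by rw [hupd]; ring⟩

lemma comp_restrict {I : Finset ι} (hi : i ∈ I) {K : (I → α) → (I → α) → ℝ}
    (hK : SplitsAt ⟨i, hi⟩ K) : SplitsAt i (fun x y => K (fun j => x j) (fun j => y j)) := by
  obtain ⟨C, H, hC, hKCH⟩ := hK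
  refine ⟨fun x y => C (fun j => x j) (fun j => y j), fun x y => H (fun j => x j) (fun j => y j),
    fun x y => hC _ _, fun x y s t => ?_⟩
  have hrestrict : ∀ (z : ι → α) (r : α),
      (fun j : I => update z i r j) = update (fun j : I => z j) ⟨i, hi⟩ r := fun z r =>
    update_comp_eq_of_injective z Subtype.val_injective ⟨i, hi⟩ r
  simp only [hrestrict, hKCH]

lemma expect_expect_nonneg [Fintype ι] [Fintype α] [Nonempty α] (hK : SplitsAt i K) :
    0 ≤ 𝔼 x, 𝔼 y, K x y := by
  obtain ⟨C, H, hC, hKCH⟩ := hK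
  calc 𝔼 x, 𝔼 y, K x y = 𝔼 x, 𝔼 s, 𝔼 y, 𝔼 t, K (update x i s) (update y i t) := by
        rw [← expect_expect_update (fun x => 𝔼 y, K x y) i]
        exact Finset.expect_congr rfl fun x _ => Finset.expect_congr rfl fun s _ =>
          (expect_expect_update _ i).symm
    _ = 𝔼 x, 𝔼 y, C x y * ((𝔼 s, H x y s) * 𝔼 t, H x y t) := by
        refine Finset.expect_congr rfl fun x _ => ?_
        rw [Finset.expect_comm]
        refine Finset.expect_congr rfl fun y _ => ?_
        rw [Finset.expect_mul_expect, Finset.mul_expect]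
        simp only [hKCH, Finset.mul_expect]
    _ ≥ 0 := Finset.expect_nonneg fun x _ => Finset.expect_nonneg fun y _ =>
          mul_nonneg (hC x y) (mul_self_nonneg _)

end SplitsAt

end Splitting

section Cube

variable {ι : Type*} {N : ℕ}

lemma proj_false (x y : ι → ZMod N) : proj (fun _ => false) x y = x := rfl

lemma projI_false {I : Finset ι} (x y : ι → ZMod N) :
    projI (fun _ : I => false) x y = fun i : I => x i := rfl

lemma proj_proj (ω σ : ι → Bool) (x y : ι → ZMod N) :
    proj ω (proj σ x y) (proj σ y x) = proj (ω + σ) x y := by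
  funext i
  have h : (ω + σ) i = xor (ω i) (σ i) := rfl
  simp only [proj, h]
  cases ω i <;> cases σ i <;> rfl

variable [DecidableEq ι]

lemma proj_funSplitAt_symm_update (k : ι) (b : Bool) (ω : {j // j ≠ k} → Bool)
    (x y : ι → ZMod N) (s t : ZMod N) :
    proj ((Equiv.funSplitAt k Bool).symm (b, ω)) (update x k s) (update y k t) =
      update (proj ((Equiv.funSplitAt k Bool).symm (false, ω)) x y) k (cond b t s) := by
  funext j
  by_cases hj : j = k
  · subst hj; cases b <;> simp [proj]
  · simp [proj, hj]

variable [Fintype ι]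

lemma splitsAt_prod_proj (g : (ι → ZMod N) → ℝ) (k : ι) :
    SplitsAt k (fun x y => ∏ ω : ι → Bool, g (proj ω x y)) := by
  let e := Equiv.funSplitAt k Bool
  refine ⟨fun _ _ => 1, fun x y s => ∏ ω, g (update (proj (e.symm (false, ω)) x y) k s),
    fun _ _ => zero_le_one, fun x y s t => ?_⟩
  beta_reduce
  rw [← e.symm.prod_comp, Fintype.prod_prod_type, Finset.prod_comm, one_mul, mul_comm,
    ← Finset.prod_mul_distrib]
  refine Finset.prod_congr rfl fun ω _ => ?_
  simp only [Fintype.prod_bool, proj_funSplitAt_symm_update, e, cond_true, cond_false]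

lemma weightProd_proj (ν : (I : Finset ι) → (I → ZMod N) → ℝ) (σ : ι → Bool)
    (x y : ι → ZMod N) : weightProd ν (proj σ x y) (proj σ y x) = weightProd ν x y :=
  Finset.prod_congr rfl fun I _ => Fintype.prod_equiv (Equiv.addRight fun i : I => σ i) _ _
    fun ω => congrArg (ν I) (proj_proj ω (fun i : I => σ i) (fun i : I => x i) (fun i : I => y i))

end Cube

section GowersInner

variable {ι : Type*} [Fintype ι] [DecidableEq ι] {N : ℕ} [NeZero N]

lemma gowersInner_self_nonneg [Nonempty ι] {ν : (I : Finset ι) → (I → ZMod N) → ℝ}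
    (hν : ∀ I, I ≠ univ → ∀ z, 0 ≤ ν I z) (f : (ι → ZMod N) → ℝ) :
    0 ≤ gowersInner ν (fun _ => f) := by
  obtain ⟨i⟩ := ‹Nonempty ι›
  refine SplitsAt.expect_expect_nonneg ((splitsAt_prod_proj f i).mul
    (SplitsAt.finsetProd fun I hI => ?_))
  by_cases hiI : i ∈ I
  · exact (splitsAt_prod_proj (ν I) ⟨i, hiI⟩).comp_restrict hiI
  · refine SplitsAt.of_update_eq (fun x y => prod_nonneg fun ω _ => hν I (by simpa using hI) _)
      fun x y s t => ?_
    have hne : ∀ j : I, (j : ι) ≠ i := fun j h => hiI (h ▸ j.2)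
    refine Finset.prod_congr rfl fun ω _ => congrArg (ν I) (funext fun j => ?_)
    simp only [projI, update_of_ne (hne j)]

variable (ν : (I : Finset ι) → (I → ZMod N) → ℝ)

lemma gowersInner_comp_add (F : (ι → Bool) → (ι → ZMod N) → ℝ) (σ : ι → Bool) :
    gowersInner ν (fun ω => F (ω + σ)) = gowersInner ν F := by
  have hinv : Function.Involutive fun p : (ι → ZMod N) × (ι → ZMod N) =>
      (proj σ p.1 p.2, proj σ p.2 p.1) := fun p => by
    ext i <;> simp only [proj] <;> cases σ i <;> rfl
  unfold gowersInner
  simp only [← Finset.expect_product', Finset.univ_product_univ]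
  refine Fintype.expect_equiv hinv.toPerm _ _ fun p => ?_
  simp only [Function.Involutive.coe_toPerm, weightProd_proj]
  congr 1
  have hσσ : σ + σ = 0 := funext fun i => BooleanRing.add_self (σ i)
  refine Fintype.prod_equiv (Equiv.addRight σ) _ _ fun ω => ?_
  rw [Equiv.coe_addRight, proj_proj, add_assoc, hσσ, add_zero]

lemma gowersInner_ite_false_eq_wInner_dualFn (w u : (ι → ZMod N) → ℝ) :
    gowersInner ν (fun ω => if ω = fun _ => false then w else u) = wInner ν w (dualFn ν u) := by
  unfold gowersInner wInner dualFn weightProd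
  refine Finset.expect_congr rfl fun x _ => ?_
  rw [Finset.mul_expect, Finset.expect_mul]
  refine Finset.expect_congr rfl fun y _ => ?_
  simp only [ite_apply, Finset.prod_ite_eq_mul_prod_filter_ne]
  rw [Finset.prod_congr rfl fun I _ => Finset.prod_eq_mul_prod_filter_ne (fun _ => false)
    fun ω => ν I (projI ω x y), Finset.prod_mul_distrib]
  simp only [proj_false, projI_false]
  ring

lemma gowersInner_ite_eq_wInner_dualFn (ω₀ : ι → Bool) (w u : (ι → ZMod N) → ℝ) :
    gowersInner ν (fun ω => if ω = ω₀ then w else u) = wInner ν w (dualFn ν u) := by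
  rw [← gowersInner_comp_add ν _ ω₀]
  simp only [add_eq_right]
  exact gowersInner_ite_false_eq_wInner_dualFn ν w u

lemma gowersInner_eq_wInner_dualFn (u : (ι → ZMod N) → ℝ) :
    gowersInner ν (fun _ => u) = wInner ν u (dualFn ν u) := by
  simpa using gowersInner_ite_false_eq_wInner_dualFn ν u u

lemma hasDerivAt_gowersInner_add_mul (u w : (ι → ZMod N) → ℝ) :
    HasDerivAt (fun t => gowersInner ν (fun _ z => u z + t * w z))
      (2 ^ Fintype.card ι * wInner ν w (dualFn ν u)) 0 := by
  have hslots : 2 ^ Fintype.card ι * wInner ν w (dualFn ν u) =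
      𝔼 x, 𝔼 y, ∑ ω₀ : ι → Bool,
        (∏ ω, (if ω = ω₀ then w else u) (proj ω x y)) * weightProd ν x y := by
    simp only [Finset.expect_sum_comm, ← gowersInner.eq_def,
      gowersInner_ite_eq_wInner_dualFn, Finset.sum_const, Finset.card_univ, Fintype.card_fun,
      Fintype.card_bool, nsmul_eq_mul, Nat.cast_pow, Nat.cast_ofNat]
  rw [hslots]
  refine HasDerivAt.fun_finsetExpect fun x _ => HasDerivAt.fun_finsetExpect fun y _ => ?_
  have hprod := (HasDerivAt.fun_finsetProd (u := Finset.univ) (x := 0)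
    fun ω _ => (hasDerivAt_mul_const (w (proj ω x y))).const_add (u (proj ω x y))).mul_const
      (weightProd ν x y)
  refine hprod.congr_deriv ?_
  rw [Finset.sum_mul]
  refine Finset.sum_congr rfl fun ω₀ _ => ?_
  simp only [ite_apply, Finset.prod_ite_eq_mul_prod_filter_ne, Finset.filter_ne', zero_mul,
    add_zero, smul_eq_mul]
  ring

lemma wInner_dualFn_le_of_isMinOn [Nonempty ι] {U : Set ((ι → ZMod N) → ℝ)} (hU : Convex ℝ U)
    {u v : (ι → ZMod N) → ℝ} (hu : u ∈ U) (hv : v ∈ U)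
    (hmin : IsMinOn (fun g => gowersInner ν (fun _ => g)) U u) :
    wInner ν u (dualFn ν u) ≤ wInner ν v (dualFn ν u) := by
  have hderiv := (hasDerivAt_gowersInner_add_mul ν u (v - u)).nonneg_of_isMinOn_Icc
    fun t ht => by
      simp only [Set.mem_ofPred_eq, zero_mul, add_zero]
      exact hmin (hU.add_smul_sub_mem hu hv ht)
  have hsub : 0 ≤ wInner ν (v - u) (dualFn ν u) := nonneg_of_mul_nonneg_right hderiv
    (by positivity)
  unfold wInner at hsub ⊢
  simp only [Pi.sub_apply, sub_mul, Finset.expect_sub_distrib, sub_nonneg] at hsub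
  exact hsub

lemma continuous_gowersInner_self :
    Continuous fun g : (ι → ZMod N) → ℝ => gowersInner ν (fun _ => g) := by
  simp only [gowersInner, Finset.expect_eq_sum_div_card]
  fun_prop

lemma gowersInner_const_mul (c : ℝ) (u : (ι → ZMod N) → ℝ) :
    gowersInner ν (fun _ z => c * u z) = c ^ 2 ^ Fintype.card ι * gowersInner ν (fun _ => u) := by
  simp only [gowersInner, Finset.mul_expect, Finset.prod_mul_distrib, Finset.prod_const,
    Finset.card_univ, Fintype.card_fun, Fintype.card_bool, mul_assoc]

lemma wInner_const_mul_right (c : ℝ) (a b : (ι → ZMod N) → ℝ) :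
    wInner ν a (fun z => c * b z) = c * wInner ν a b := by
  simp only [wInner, Finset.mul_expect]
  exact Finset.expect_congr rfl fun x _ => by ring

lemma wInner_eval_left (p : Polynomial ℝ) (F b : (ι → ZMod N) → ℝ) :
    wInner ν (fun x => p.eval (F x)) b =
      ∑ k ∈ range (p.natDegree + 1), p.coeff k * wInner ν (fun x => F x ^ k) b := by
  simp only [wInner, Polynomial.eval_eq_sum_range, Finset.sum_mul, Finset.mul_expect,
    ← Finset.expect_sum_comm]
  exact Finset.expect_congr rfl fun x _ => Finset.sum_congr rfl fun k _ => by ring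

end GowersInner

section Weighted

variable {ι : Type*} [Fintype ι] [DecidableEq ι] {N : ℕ} [NeZero N]
  {ν : (I : Finset ι) → (I → ZMod N) → ℝ} (hν : ∀ I, I ≠ univ → ∀ z, 0 ≤ ν I z)
include hν

lemma wInner_le_wInner {a b c e : (ι → ZMod N) → ℝ} (h : ∀ x, a x * b x ≤ c x * e x) :
    wInner ν a b ≤ wInner ν c e :=
  Finset.expect_le_expect fun x _ => mul_le_mul_of_nonneg_right (h x)
    (prod_nonneg fun I hI => hν I (by simpa using hI) _)

variable [Nonempty ι]

lemma boxNorm_const_mul {c : ℝ} (hc : 0 ≤ c) (u : (ι → ZMod N) → ℝ) :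
    boxNorm ν (fun z => c * u z) = c * boxNorm ν u := by
  rw [boxNorm, gowersInner_const_mul, Real.mul_rpow (by positivity)
    (gowersInner_self_nonneg hν u), rpow_inv_two_pow_of_nonneg hc, boxNorm]

lemma boxNorm_le_of_gowersInner_le {u : (ι → ZMod N) → ℝ} {η : ℝ} (hη : 0 ≤ η)
    (h : gowersInner ν (fun _ => u) ≤ η ^ 2 ^ Fintype.card ι) : boxNorm ν u ≤ η :=
  (Real.rpow_le_rpow (gowersInner_self_nonneg hν u) h (by positivity)).trans_eq
    (rpow_inv_two_pow_of_nonneg hη _)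

lemma abs_wInner_le_mul_of_boxNorm_le {a b : (ι → ZMod N) → ℝ} {C ε : ℝ} (hε : 0 < ε)
    (hb : boxNorm ν b ≤ ε) (ha : ∀ f, boxNorm ν f ≤ 1 → |wInner ν a f| ≤ C) :
    |wInner ν a b| ≤ C * ε := by
  have hscaled : boxNorm ν (fun z => ε⁻¹ * b z) ≤ 1 := by
    rw [boxNorm_const_mul hν (inv_nonneg.mpr hε.le), inv_mul_le_one₀ hε]
    exact hb
  have h := ha _ hscaled
  rwa [wInner_const_mul_right, abs_mul, abs_inv, abs_of_pos hε, inv_mul_le_iff₀ hε,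
    mul_comm] at h

lemma abs_wInner_eval_le (p : Polynomial ℝ) {F b : (ι → ZMod N) → ℝ} {C : ℕ → ℝ} {ε : ℝ}
    (hε : 0 < ε) (hb : boxNorm ν b ≤ ε)
    (hF : ∀ k f, boxNorm ν f ≤ 1 → |wInner ν (fun x => F x ^ k) f| ≤ C k) :
    |wInner ν (fun x => p.eval (F x)) b| ≤
      ε * ∑ k ∈ range (p.natDegree + 1), |p.coeff k| * C k := by
  rw [wInner_eval_left, Finset.mul_sum]
  refine (Finset.abs_sum_le_sum_abs _ _).trans (Finset.sum_le_sum fun k _ => ?_)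
  rw [abs_mul, mul_left_comm, mul_comm ε]
  exact mul_le_mul_of_nonneg_left (abs_wInner_le_mul_of_boxNorm_le hν hε hb (hF k))
    (abs_nonneg _)

end Weighted

section Transference

variable {ι : Type*} {N : ℕ} {Ω : Set (ι → ZMod N)} {f νd u : (ι → ZMod N) → ℝ}

lemma mem_FT_of_mem_Icc_indicator {a b : (ι → ZMod N) → ℝ}
    (hu : u ∈ Set.Icc (Ω.indicator a) (Ω.indicator b)) : u ∈ FT Ω := fun x hx =>
  le_antisymm (by simpa [hx] using hu.2 x) (by simpa [hx] using hu.1 x)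

lemma mem_STset_of_mem_Icc_indicator (hf : ∀ x, 0 ≤ f x ∧ f x ≤ νd x)
    (hu : u ∈ Set.Icc (Ω.indicator fun x => f x - 2) (Ω.indicator f)) : u ∈ STset Ω νd := by
  refine ⟨mem_FT_of_mem_Icc_indicator hu, fun x => abs_le.mpr ?_⟩
  have hlo := hu.1 x
  have hhi := hu.2 x
  by_cases hx : x ∈ Ω
  · simp only [Set.indicator_of_mem hx] at hlo hhi
    constructor <;> linarith [hf x]
  · simp only [Set.indicator_of_notMem hx] at hlo hhi
    constructor <;> linarith [hf x]

variable [Fintype ι] [DecidableEq ι] [NeZero N] {ν : (I : Finset ι) → (I → ZMod N) → ℝ}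

lemma dualFn_eq_zero_of_notMem (hΩ : HasFaceStructure Ω) (hu : u ∈ FT Ω) {x : ι → ZMod N}
    (hx : x ∉ Ω) : dualFn ν u x = 0 := by
  obtain ⟨ΩJ, hdep, rfl⟩ := hΩ
  simp only [Set.mem_iInter, not_forall] at hx
  obtain ⟨J, ⟨hJ0, hJ⟩, hxJ⟩ := hx
  obtain ⟨i, hi⟩ := Finset.nonempty_iff_ne_empty.mpr hJ0
  -- the vertex of the cube that moves only the coordinate `i ∈ J` stays outside `Ω_J`
  refine Finset.expect_eq_zero fun y _ => mul_eq_zero_of_left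
    (Finset.prod_eq_zero (i := fun j => decide (j = i)) ?_ (hu _ fun hmem => hxJ ?_)) _
  · simpa using fun h => by simpa using congrFun h i
  · refine hdep J hJ0 hJ _ x (fun j hj => ?_) (Set.mem_iInter₂.mp hmem J ⟨hJ0, hJ⟩)
    simp [proj, show j ≠ i from fun h => hj (h ▸ hi)]

lemma gowersInner_le_of_isMinOn [Nonempty ι] (hν : ∀ I, I ≠ univ → ∀ z, 0 ≤ ν I z)
    (hνd : ∀ x, 0 ≤ νd x) (hf : ∀ x, 0 ≤ f x ∧ f x ≤ νd x) (hΩ : HasFaceStructure Ω)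
    (hu : u ∈ Set.Icc (Ω.indicator fun x => f x - 2) (Ω.indicator f))
    (hmin : IsMinOn (fun g => gowersInner ν (fun _ => g))
      (Set.Icc (Ω.indicator fun x => f x - 2) (Ω.indicator f)) u)
    {T δ : ℝ} (hT : 0 ≤ T) (hDT : ∀ x ∈ Ω, |dualFn ν u x| ≤ T) {p : Polynomial ℝ}
    (hp : ∀ t ∈ Set.Icc (-T) T, |p.eval t - max t 0| < δ) :
    gowersInner ν (fun _ => u) ≤ wInner ν (fun x => p.eval (dualFn ν u x)) (fun x => νd x - 1) +
      δ * (wInner ν νd (fun _ => 1) + wInner ν (fun _ => 1) (fun _ => 1)) := by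
  set D := dualFn ν u
  have hD0 : ∀ x ∉ Ω, D x = 0 := fun x hx =>
    dualFn_eq_zero_of_notMem hΩ (mem_FT_of_mem_Icc_indicator hu) hx
  set v := Ω.indicator fun x => if 0 < D x then f x - 2 else f x
  have hv : v ∈ Set.Icc (Ω.indicator fun x => f x - 2) (Ω.indicator f) := by
    constructor <;> intro x <;> refine Set.indicator_le_indicator' fun _ => ?_ <;>
      split_ifs <;> linarith
  have hvD : ∀ x, v x * D x ≤ (νd x - 1) * max (D x) 0 := by
    intro x
    by_cases hx : x ∈ Ω
    · simp only [v, Set.indicator_of_mem hx]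
      split_ifs with hpos
      · rw [max_eq_left hpos.le]
        exact mul_le_mul_of_nonneg_right (by linarith [hf x]) hpos.le
      · rw [max_eq_right (not_lt.mp hpos), mul_zero]
        exact mul_nonpos_of_nonneg_of_nonpos (hf x).1 (not_lt.mp hpos)
    · simp [hD0 x hx]
  have happrox : ∀ x, (νd x - 1) * max (D x) 0 ≤ p.eval (D x) * (νd x - 1) + δ * (νd x + 1) := by
    intro x
    have hDx : D x ∈ Set.Icc (-T) T := by
      by_cases hx : x ∈ Ω
      · exact abs_le.mp (hDT x hx)
      · simp [hD0 x hx, hT]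
    have hνd1 : |νd x - 1| ≤ νd x + 1 := abs_le.mpr ⟨by linarith [hνd x], by linarith⟩
    have hdiff : (νd x - 1) * (max (D x) 0 - p.eval (D x)) ≤ (νd x + 1) * δ :=
      calc (νd x - 1) * (max (D x) 0 - p.eval (D x))
          ≤ |νd x - 1| * |max (D x) 0 - p.eval (D x)| := by rw [← abs_mul]; exact le_abs_self _
        _ ≤ (νd x + 1) * δ := mul_le_mul hνd1 (by rw [abs_sub_comm]; exact (hp _ hDx).le)
            (abs_nonneg _) (by linarith [hνd x])
    linarith
  calc gowersInner ν (fun _ => u) = wInner ν u D := gowersInner_eq_wInner_dualFn ν u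
    _ ≤ wInner ν v D := wInner_dualFn_le_of_isMinOn ν (convex_Icc _ _) hu hv hmin
    _ ≤ wInner ν (fun x => p.eval (D x) * (νd x - 1) + δ * (νd x + 1)) (fun _ => 1) :=
        wInner_le_wInner hν fun x => by simpa using (hvD x).trans (happrox x)
    _ = _ := by
        simp only [wInner, Finset.mul_expect, ← Finset.expect_add_distrib]
        exact Finset.expect_congr rfl fun x _ => by ring

end Transference

theorem transference_decomposition_general (d : ℕ) (hd : 1 ≤ d) (T η : ℝ) (hT : 1 < T)
    (hη0 : 0 < η) (Cm : ℕ → ℝ) :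
    ∃ ε : ℝ, 0 < ε ∧ ∀ (N : ℕ) [NeZero N], 1 ≤ N →
    ∀ ν : (I : Finset (Fin d)) → (I → ZMod N) → ℝ,
      (∀ I : Finset (Fin d), I ≠ univ → ∀ z, 0 ≤ ν I z) →
    ∀ νd : (Fin d → ZMod N) → ℝ, (∀ x, 0 ≤ νd x) →
    ∀ Ω : Set (Fin d → ZMod N), HasFaceStructure Ω →
    (∀ g ∈ STset Ω νd, ∀ x ∈ Ω, |dualFn ν g x| ≤ T) →
    (∀ (m : ℕ) (g : Fin m → ((Fin d → ZMod N) → ℝ)), (∀ j, g j ∈ STset Ω νd) →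
      ∀ f : (Fin d → ZMod N) → ℝ, boxNorm ν f ≤ 1 →
        |wInner ν (fun x => ∏ j, dualFn ν (g j) x) f| ≤ Cm m) →
    (∀ f ∈ FT Ω, f ≠ 0 → 0 < wInner ν f (dualFn ν f)) →
    boxNorm ν (fun x => νd x - 1) ≤ ε →
    wInner ν νd (fun _ => 1) ≤ 1 + ε →
    wInner ν (fun _ => 1) (fun _ => 1) ≤ 1 + ε →
    ∀ f : (Fin d → ZMod N) → ℝ, (∀ x, 0 ≤ f x ∧ f x ≤ νd x) →
    ∃ g h : (Fin d → ZMod N) → ℝ,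
      (∀ x ∈ Ω, f x = g x + h x) ∧
      (∀ x ∈ Ω, 0 ≤ g x ∧ g x ≤ 2) ∧
      boxNorm ν (Ω.indicator h) ≤ η := by
  set κ := η ^ 2 ^ d
  obtain ⟨p, hp⟩ := exists_polynomial_near_of_continuousOn (-T) T (fun t => max t 0)
    (continuous_id.max continuous_const).continuousOn (κ / 8) (by positivity)
  obtain ⟨ε, hε0, hε1, hεB⟩ := exists_pos_le_one_mul_le
    (∑ k ∈ range (p.natDegree + 1), |p.coeff k| * Cm k) (by positivity : 0 < κ / 2)
  refine ⟨ε, hε0, fun N _ _ ν hν νd hνd Ω hΩ hdual hcorr _ hbox hνd1 h11 f hf => ?_⟩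
  have : Nonempty (Fin d) := ⟨⟨0, hd⟩⟩
  obtain ⟨u, hu, hmin⟩ := (isCompact_Icc (a := Ω.indicator fun x => f x - 2)
    (b := Ω.indicator f)).exists_isMinOn
    (Set.nonempty_Icc.mpr fun x => Set.indicator_le_indicator' fun _ => by linarith)
    (continuous_gowersInner_self ν).continuousOn
  have huS := mem_STset_of_mem_Icc_indicator hf hu
  have hG := gowersInner_le_of_isMinOn hν hνd hf hΩ hu hmin (by linarith) (hdual u huS) hp
  have hcorr_u := abs_wInner_eval_le hν p hε0 hbox (F := dualFn ν u) (C := Cm)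
    fun k g hg => by simpa using hcorr k (fun _ => u) (fun _ => huS) g hg
  have hGκ : gowersInner ν (fun _ => u) ≤ η ^ 2 ^ Fintype.card (Fin d) := by
    calc gowersInner ν (fun _ => u) ≤ κ / 2 + κ / 8 * 4 :=
          hG.trans (add_le_add ((le_abs_self _).trans (hcorr_u.trans hεB))
            (mul_le_mul_of_nonneg_left (by linarith) (by positivity)))
      _ = η ^ 2 ^ Fintype.card (Fin d) := by rw [Fintype.card_fin]; ring
  refine ⟨f - u, u, fun x _ => by simp, fun x hx => ?_, ?_⟩
  · have hlo := hu.1 x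
    have hhi := hu.2 x
    simp only [Set.indicator_of_mem hx] at hlo hhi
    constructor <;> simp only [Pi.sub_apply] <;> linarith
  · rw [Set.indicator_eq_self.mpr fun x hx => not_imp_comm.mp (huS.1 x) hx]
    exact boxNorm_le_of_gowersInner_le hν hη0.le hGκ

/-- Abstract transference decomposition. -/
theorem transference_decomposition (d : ℕ) (hd : 1 ≤ d) (T η : ℝ) (hT : 1 < T)
    (hη0 : 0 < η) (hη1 : η < 1) (Cm : ℕ → ℝ) (hCm : ∀ m, 0 < Cm m) :
    ∃ ε : ℝ, 0 < ε ∧ ∀ (N : ℕ) [NeZero N], 1 ≤ N →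
    ∀ ν : (I : Finset (Fin d)) → (I → ZMod N) → ℝ,
      (∀ I : Finset (Fin d), I ≠ univ → ∀ z, 0 ≤ ν I z) →
    ∀ νd : (Fin d → ZMod N) → ℝ, (∀ x, 0 ≤ νd x) →
    ∀ Ω : Set (Fin d → ZMod N), HasFaceStructure Ω →
    (∀ g ∈ STset Ω νd, ∀ x ∈ Ω, |dualFn ν g x| ≤ T) →
    (∀ (m : ℕ) (g : Fin m → ((Fin d → ZMod N) → ℝ)), (∀ j, g j ∈ STset Ω νd) →
      ∀ f : (Fin d → ZMod N) → ℝ, boxNorm ν f ≤ 1 →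
        |wInner ν (fun x => ∏ j, dualFn ν (g j) x) f| ≤ Cm m) →
    (∀ f ∈ FT Ω, f ≠ 0 → 0 < wInner ν f (dualFn ν f)) →
    boxNorm ν (fun x => νd x - 1) ≤ ε →
    wInner ν νd (fun _ => 1) ≤ 1 + ε →
    wInner ν (fun _ => 1) (fun _ => 1) ≤ 1 + ε →
    ∀ f : (Fin d → ZMod N) → ℝ, (∀ x, 0 ≤ f x ∧ f x ≤ νd x) →
    ∃ g h : (Fin d → ZMod N) → ℝ,
      (∀ x ∈ Ω, f x = g x + h x) ∧
      (∀ x ∈ Ω, 0 ≤ g x ∧ g x ≤ 2) ∧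
      boxNorm ν (Ω.indicator h) ≤ η :=
  transference_decomposition_general d hd T η hT hη0 Cm

end
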